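/- arXiv:2012.14702 — 6 statements merged into one kernel-verified Lean document; each statement's English description precedes it below -/
import Mathlib

section
/- Let M = D + Δ where D = diag(ε₁,…,εₙ) has pairwise distinct diagonal entries, fix i, and let z ∈ ℂⁿ with z_i = 1. Then Mz = λz for some λ ∈ ℂ if and only if for all j ≠ i: z_j = (ε_j − ε_i)^{-1} ( z_j (Δz)_i − (Δz)_j ). Equivalently, z is a fixed point of the map f_i(z) = e_i + g_i ∘ (z (Δz)_i − Δz), where g_i is the vector with (g_i)_j = (ε_j − ε_i)^{-1} for j ≠ i and (g_i)_i = 0, and ∘ denotes the componentwise product. -/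
/-!
Normalising `z i = 1` pins the eigenvalue down to row `i` of the eigen-equation,
`λ = ε i + (Δ z) i`. Substituting this into row `j ≠ i` and dividing by the nonzero
gap `ε j - ε i` gives exactly the fixed-point equation.
-/

open Matrix

theorem Matrix.exists_mulVec_eq_smul_iff_of_apply_eq_one {ι R : Type*} [Fintype ι] [CommRing R]
    (M : Matrix ι ι R) {z : ι → R} {i : ι} (hz : z i = 1) :
    (∃ lam : R, M *ᵥ z = lam • z) ↔ ∀ j, (M *ᵥ z) j = (M *ᵥ z) i * z j := by
  constructor
  · rintro ⟨lam, h⟩ j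
    have hlam : (M *ᵥ z) i = lam := by simpa [hz] using congrFun h i
    simpa [hlam] using congrFun h j
  · exact fun h => ⟨(M *ᵥ z) i, funext h⟩

theorem Matrix.diagonal_add_mulVec_apply {ι R : Type*} [Fintype ι] [DecidableEq ι] [CommRing R]
    (ε : ι → R) (Δ : Matrix ι ι R) (z : ι → R) (j : ι) :
    ((diagonal ε + Δ) *ᵥ z) j = ε j * z j + (Δ *ᵥ z) j := by
  simp [add_mulVec, mulVec_diagonal]

theorem eq_inv_sub_mul_iff {K : Type*} [Field K] {a b : K} (hab : a ≠ b) (c d w : K) :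
    w = (a - b)⁻¹ * (w * c - d) ↔ a * w + d = (b + c) * w := by
  rw [eq_inv_mul_iff_mul_eq₀ (sub_ne_zero.mpr hab)]
  constructor <;> intro h <;> linear_combination h

/-- For `M = D + Δ` with `D = diag ε` having pairwise distinct entries and `z i = 1`,
`z` is an eigenvector of `M` iff `z` is a fixed point of the IPT map
`f_i(z) = e_i + g_i ∘ (z (Δz)_i − Δz)`, i.e. iff
`z_j = (ε_j − ε_i)⁻¹ (z_j (Δz)_i − (Δz)_j)` for all `j ≠ i`. -/
theorem eigenvector_iff_IPT_fixed_point {n : ℕ} (ε : Fin n → ℂ)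
    (hdist : Function.Injective ε) (Δ : Matrix (Fin n) (Fin n) ℂ)
    (i : Fin n) (z : Fin n → ℂ) (hnorm : z i = 1) :
    (∃ lam : ℂ, (Matrix.diagonal ε + Δ).mulVec z = lam • z) ↔
      ∀ j : Fin n, j ≠ i →
        z j = (ε j - ε i)⁻¹ * (z j * Δ.mulVec z i - Δ.mulVec z j) := by
  simp only [exists_mulVec_eq_smul_iff_of_apply_eq_one _ hnorm, diagonal_add_mulVec_apply, hnorm,
    mul_one]
  refine ⟨fun h j hj => (eq_inv_sub_mul_iff (hdist.ne hj) _ _ _).mpr (h j), fun h j => ?_⟩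
  rcases eq_or_ne j i with rfl | hj
  · rw [hnorm, mul_one, mul_one]
  · exact (eq_inv_sub_mul_iff (hdist.ne hj) _ _ _).mp (h j hj)
end

section
/- Let D be diagonal with distinct entries, Δ ∈ ℂ^{n×n}, G the inverse gaps matrix with G_{jk} = (D_{jj} − D_{kk})^{-1} for j ≠ k and G_{jj} = 0, and F(Z) = I + G ∘ (Z·𝒟(ΔZ) − ΔZ), where ∘ is the Hadamard product and 𝒟(X) is the diagonal matrix of the diagonal of X. If ‖G‖ ‖Δ‖ < 3 − 2√2 (spectral norms), then F maps the closed ball B of radius √2 around I (in spectral norm) into itself and is a contraction on B; hence F has a unique fixed point Z* in B, and the iterates Z^{(k)} = F^k(I) converge to Z* at an exponential (geometric) rate. -/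
/-!
With `g = ‖G‖ ‖Δ‖`, submultiplicativity of the spectral norm for the ordinary and the Hadamard
product, together with `‖𝒟(X)‖ ≤ ‖X‖`, gives on the ball `‖Z - I‖ ≤ r` (where `‖Z‖ ≤ 1 + r`)
`‖F Z - I‖ ≤ g (1 + r) (2 + r)` and, from `Z 𝒟(ΔZ) - W 𝒟(ΔW) = (Z - W) 𝒟(ΔZ) + W 𝒟(Δ(Z - W))`,
`‖F Z - F W‖ ≤ g (3 + 2r) ‖Z - W‖`. The radius `r = √2` maximises `r / ((1 + r) (2 + r))`, with
maximum `3 - 2√2 = 1 / (3 + 2√2)`, so `g < 3 - 2√2` makes `F` a contraction of the complete ball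
into itself, and Banach's fixed point theorem applies.
-/

open Matrix Function Metric Set
open scoped Matrix.Norms.L2Operator

section FixedPoint
variable {α : Type*} [MetricSpace α] {f : α → α} {s : Set α} {K : NNReal}

theorem LipschitzOnWith.dist_iterate_le_of_isFixedPt (hf : LipschitzOnWith K f s)
    (hmaps : MapsTo f s s) {x z : α} (hx : x ∈ s) (hz : z ∈ s) (hfix : IsFixedPt f z) (k : ℕ) :
    dist (f^[k] x) z ≤ K ^ k * dist x z := by
  induction k with
  | zero => simp
  | succ k ih =>
    calc dist (f^[k + 1] x) z = dist (f (f^[k] x)) (f z) := by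
          rw [iterate_succ_apply', hfix.eq]
      _ ≤ K * dist (f^[k] x) z := hf.dist_le_mul _ (hmaps.iterate k hx) _ hz
      _ ≤ K * (K ^ k * dist x z) := by gcongr
      _ = K ^ (k + 1) * dist x z := by ring

theorem LipschitzOnWith.eq_of_isFixedPt (hf : LipschitzOnWith K f s) (hK : K < 1)
    {z w : α} (hz : z ∈ s) (hw : w ∈ s) (hfz : IsFixedPt f z) (hfw : IsFixedPt f w) : w = z := by
  have h : dist w z ≤ K * dist w z := by
    simpa only [hfw.eq, hfz.eq] using hf.dist_le_mul w hw z hz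
  have hK' : (K : ℝ) < 1 := hK
  exact dist_le_zero.mp (by nlinarith [dist_nonneg (x := w) (y := z)])

theorem LipschitzOnWith.exists_isFixedPt (hf : LipschitzOnWith K f s) (hK : K < 1)
    (hmaps : MapsTo f s s) (hs : IsComplete s) (hne : s.Nonempty) : ∃ z ∈ s, IsFixedPt f z := by
  obtain ⟨x, hx⟩ := hne
  obtain ⟨z, hz, hfix, -⟩ := ContractingWith.exists_fixedPoint' hs hmaps
    ⟨hK, hf.mapsToRestrict hmaps⟩ hx (edist_ne_top _ _)
  exact ⟨z, hz, hfix⟩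

end FixedPoint

namespace Matrix

theorem hadamard_sub {m n α : Type*} [NonUnitalNonAssocRing α] (A B C : Matrix m n α) :
    A ⊙ (B - C) = A ⊙ B - A ⊙ C :=
  ext fun _ _ => mul_sub _ _ _

section L2OpNorm
variable {𝕜 m n : Type*} [RCLike 𝕜] [Fintype m] [Fintype n] [DecidableEq n]

theorem l2_opNorm_le_of_sum_sq_le (A : Matrix m n 𝕜) {c : ℝ} (hc : 0 ≤ c)
    (h : ∀ u : n → 𝕜, ∑ i, ‖(A *ᵥ u) i‖ ^ 2 ≤ c ^ 2 * ∑ j, ‖u j‖ ^ 2) : ‖A‖ ≤ c := by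
  rw [l2_opNorm_def]
  refine ContinuousLinearMap.opNorm_le_bound _ hc fun x => ?_
  refine (sq_le_sq₀ (norm_nonneg _) (by positivity)).mp ?_
  simpa [EuclideanSpace.norm_sq_eq, mul_pow] using h x.ofLp

theorem sum_norm_sq_apply_le_l2_opNorm_sq (A : Matrix m n 𝕜) (j : n) :
    ∑ i, ‖A i j‖ ^ 2 ≤ ‖A‖ ^ 2 := by
  have h := A.l2_opNorm_mulVec (EuclideanSpace.single j 1)
  rw [PiLp.norm_single, norm_one, mul_one] at h
  simpa [EuclideanSpace.norm_sq_eq, mulVec_single_one] using pow_le_pow_left₀ (norm_nonneg _) h 2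

theorem sum_norm_sq_row_le_l2_opNorm_sq [DecidableEq m] (A : Matrix m n 𝕜) (i : m) :
    ∑ j, ‖A i j‖ ^ 2 ≤ ‖A‖ ^ 2 := by
  simpa [l2_opNorm_conjTranspose] using sum_norm_sq_apply_le_l2_opNorm_sq Aᴴ i

theorem norm_apply_le_l2_opNorm (A : Matrix m n 𝕜) (i : m) (j : n) : ‖A i j‖ ≤ ‖A‖ :=
  pow_le_pow_iff_left₀ (norm_nonneg _) (norm_nonneg _) two_ne_zero |>.mp <|
    (Finset.single_le_sum (fun i _ => sq_nonneg ‖A i j‖) (Finset.mem_univ i)).trans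
      (sum_norm_sq_apply_le_l2_opNorm_sq A j)

theorem l2_opNorm_diagonal_diag_le (A : Matrix n n 𝕜) : ‖diagonal A.diag‖ ≤ ‖A‖ := by
  rw [l2_opNorm_diagonal]
  exact (pi_norm_le_iff_of_nonneg (norm_nonneg A)).mpr fun i => norm_apply_le_l2_opNorm A i i

theorem l2_opNorm_one_le : ‖(1 : Matrix n n 𝕜)‖ ≤ 1 := by
  rw [← diagonal_one, l2_opNorm_diagonal]
  exact (pi_norm_le_iff_of_nonneg zero_le_one).mpr fun _ => norm_one.le

/- Cauchy–Schwarz in each row of `A ⊙ B`, then the rows of `A` and the columns of `B` have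
Euclidean norm at most the operator norm. -/
theorem l2_opNorm_hadamard_le [DecidableEq m] (A B : Matrix m n 𝕜) : ‖A ⊙ B‖ ≤ ‖A‖ * ‖B‖ := by
  refine l2_opNorm_le_of_sum_sq_le _ (by positivity) fun u => ?_
  have hrow (i : m) : ‖((A ⊙ B) *ᵥ u) i‖ ^ 2 ≤ ‖A‖ ^ 2 * ∑ j, ‖B i j‖ ^ 2 * ‖u j‖ ^ 2 := by
    have hsum : ‖((A ⊙ B) *ᵥ u) i‖ ≤ ∑ j, ‖A i j‖ * (‖B i j‖ * ‖u j‖) := by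
      simp only [mulVec, dotProduct, hadamard_apply]
      refine (norm_sum_le _ _).trans_eq (Finset.sum_congr rfl fun j _ => ?_)
      rw [norm_mul, norm_mul, mul_assoc]
    calc ‖((A ⊙ B) *ᵥ u) i‖ ^ 2 ≤ (∑ j, ‖A i j‖ * (‖B i j‖ * ‖u j‖)) ^ 2 := by gcongr
      _ ≤ (∑ j, ‖A i j‖ ^ 2) * ∑ j, (‖B i j‖ * ‖u j‖) ^ 2 := Finset.sum_mul_sq_le_sq_mul_sq _ _ _
      _ ≤ ‖A‖ ^ 2 * ∑ j, ‖B i j‖ ^ 2 * ‖u j‖ ^ 2 := by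
        simp only [mul_pow]
        gcongr
        exact sum_norm_sq_row_le_l2_opNorm_sq A i
  calc ∑ i, ‖((A ⊙ B) *ᵥ u) i‖ ^ 2 ≤ ∑ i, ‖A‖ ^ 2 * ∑ j, ‖B i j‖ ^ 2 * ‖u j‖ ^ 2 :=
        Finset.sum_le_sum fun i _ => hrow i
    _ = ‖A‖ ^ 2 * ∑ j, (∑ i, ‖B i j‖ ^ 2) * ‖u j‖ ^ 2 := by
        simp only [← Finset.mul_sum, Finset.sum_mul]
        rw [Finset.sum_comm]
    _ ≤ ‖A‖ ^ 2 * ∑ j, ‖B‖ ^ 2 * ‖u j‖ ^ 2 := by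
        gcongr with j
        exact sum_norm_sq_apply_le_l2_opNorm_sq B j
    _ = (‖A‖ * ‖B‖) ^ 2 * ∑ j, ‖u j‖ ^ 2 := by
        rw [← Finset.mul_sum]; ring

end L2OpNorm

section IptMap
variable {𝕜 ι : Type*} [RCLike 𝕜] [Fintype ι] [DecidableEq ι]

def iptMap (G Δ Z : Matrix ι ι 𝕜) : Matrix ι ι 𝕜 :=
  1 + G ⊙ (Z * diagonal (Δ * Z).diag - Δ * Z)

variable (G Δ : Matrix ι ι 𝕜)

theorem l2_opNorm_mul_diagonal_diag_mul_le (A B : Matrix ι ι 𝕜) :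
    ‖A * diagonal (Δ * B).diag‖ ≤ ‖A‖ * (‖Δ‖ * ‖B‖) :=
  (l2_opNorm_mul _ _).trans <| by
    gcongr; exact (l2_opNorm_diagonal_diag_le _).trans (l2_opNorm_mul _ _)

theorem norm_iptMap_sub_one_le (Z : Matrix ι ι 𝕜) :
    ‖iptMap G Δ Z - 1‖ ≤ ‖G‖ * ‖Δ‖ * (‖Z‖ * (‖Z‖ + 1)) := by
  rw [iptMap, add_sub_cancel_left]
  calc ‖G ⊙ (Z * diagonal (Δ * Z).diag - Δ * Z)‖
      ≤ ‖G‖ * (‖Z‖ * (‖Δ‖ * ‖Z‖) + ‖Δ‖ * ‖Z‖) := by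
        grw [l2_opNorm_hadamard_le, norm_sub_le, l2_opNorm_mul_diagonal_diag_mul_le,
          l2_opNorm_mul Δ Z]
    _ = ‖G‖ * ‖Δ‖ * (‖Z‖ * (‖Z‖ + 1)) := by ring

theorem iptMap_sub_iptMap (Z W : Matrix ι ι 𝕜) :
    iptMap G Δ Z - iptMap G Δ W = G ⊙ ((Z - W) * diagonal (Δ * Z).diag
      + W * diagonal (Δ * (Z - W)).diag - Δ * (Z - W)) := by
  have hdiag : diagonal (Δ * (Z - W)).diag = diagonal (Δ * Z).diag - diagonal (Δ * W).diag := by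
    rw [mul_sub, diag_sub, diagonal_sub]; rfl
  rw [iptMap, iptMap, add_sub_add_left_eq_sub, ← hadamard_sub, hdiag]
  congr 1
  noncomm_ring

theorem norm_iptMap_sub_iptMap_le (Z W : Matrix ι ι 𝕜) :
    ‖iptMap G Δ Z - iptMap G Δ W‖ ≤ ‖G‖ * ‖Δ‖ * (‖Z‖ + ‖W‖ + 1) * ‖Z - W‖ := by
  rw [iptMap_sub_iptMap]
  calc _ ≤ ‖G‖ * (‖Z - W‖ * (‖Δ‖ * ‖Z‖) + ‖W‖ * (‖Δ‖ * ‖Z - W‖) + ‖Δ‖ * ‖Z - W‖) := by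
        grw [l2_opNorm_hadamard_le, norm_sub_le, norm_add_le, l2_opNorm_mul_diagonal_diag_mul_le,
          l2_opNorm_mul_diagonal_diag_mul_le, l2_opNorm_mul Δ]
    _ = ‖G‖ * ‖Δ‖ * (‖Z‖ + ‖W‖ + 1) * ‖Z - W‖ := by ring

theorem norm_le_of_mem_closedBall_one {r : ℝ} {Z : Matrix ι ι 𝕜}
    (hZ : Z ∈ closedBall 1 r) : ‖Z‖ ≤ 1 + r := by
  rw [mem_closedBall_iff_norm] at hZ
  calc ‖Z‖ ≤ ‖(1 : Matrix ι ι 𝕜)‖ + ‖Z - 1‖ := norm_le_insert' Z 1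
    _ ≤ 1 + r := add_le_add l2_opNorm_one_le hZ

theorem mapsTo_iptMap_closedBall {r : ℝ} (h : ‖G‖ * ‖Δ‖ * ((1 + r) * (2 + r)) ≤ r) :
    MapsTo (iptMap G Δ) (closedBall 1 r) (closedBall 1 r) := by
  intro Z hZ
  have hZr := norm_le_of_mem_closedBall_one hZ
  rw [mem_closedBall_iff_norm]
  calc ‖iptMap G Δ Z - 1‖ ≤ ‖G‖ * ‖Δ‖ * (‖Z‖ * (‖Z‖ + 1)) := norm_iptMap_sub_one_le G Δ Z
    _ ≤ ‖G‖ * ‖Δ‖ * ((1 + r) * (2 + r)) := by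
      gcongr ‖G‖ * ‖Δ‖ * ?_; nlinarith [norm_nonneg Z]
    _ ≤ r := h

theorem lipschitzOnWith_iptMap {r : ℝ} {K : NNReal} (hK : ‖G‖ * ‖Δ‖ * (3 + 2 * r) ≤ K) :
    LipschitzOnWith K (iptMap G Δ) (closedBall 1 r) := by
  refine LipschitzOnWith.of_dist_le_mul fun Z hZ W hW => ?_
  have hZr := norm_le_of_mem_closedBall_one hZ
  have hWr := norm_le_of_mem_closedBall_one hW
  rw [dist_eq_norm, dist_eq_norm]
  calc ‖iptMap G Δ Z - iptMap G Δ W‖ ≤ ‖G‖ * ‖Δ‖ * (‖Z‖ + ‖W‖ + 1) * ‖Z - W‖ :=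
        norm_iptMap_sub_iptMap_le G Δ Z W
    _ ≤ ‖G‖ * ‖Δ‖ * (3 + 2 * r) * ‖Z - W‖ := by gcongr ‖G‖ * ‖Δ‖ * ?_ * _; linarith
    _ ≤ K * ‖Z - W‖ := by gcongr

end IptMap

end Matrix

theorem IPT_contraction_convergence_general {n : ℕ} (Δ : Matrix (Fin n) (Fin n) ℂ)
    (G : Matrix (Fin n) (Fin n) ℂ)
    (F : Matrix (Fin n) (Fin n) ℂ → Matrix (Fin n) (Fin n) ℂ)
    (hF : F = fun Z => 1 + G ⊙ (Z * Matrix.diagonal (fun i => (Δ * Z) i i) - Δ * Z))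
    (hsmall : ‖G‖ * ‖Δ‖ < 3 - 2 * Real.sqrt 2) :
    Set.MapsTo F (Metric.closedBall (1 : Matrix (Fin n) (Fin n) ℂ) (Real.sqrt 2))
        (Metric.closedBall 1 (Real.sqrt 2)) ∧
      (∃ K : NNReal, K < 1 ∧
        LipschitzOnWith K F (Metric.closedBall 1 (Real.sqrt 2))) ∧
      ∃ Zs : Matrix (Fin n) (Fin n) ℂ,
        Zs ∈ Metric.closedBall (1 : Matrix (Fin n) (Fin n) ℂ) (Real.sqrt 2) ∧
        F Zs = Zs ∧
        (∀ W ∈ Metric.closedBall (1 : Matrix (Fin n) (Fin n) ℂ) (Real.sqrt 2),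
          F W = W → W = Zs) ∧
        ∃ C r : ℝ, 0 ≤ C ∧ 0 ≤ r ∧ r < 1 ∧
          ∀ k : ℕ, ‖F^[k] 1 - Zs‖ ≤ C * r ^ k := by
  obtain rfl : F = iptMap G Δ := hF
  have hsqrt : Real.sqrt 2 ^ 2 = 2 := Real.sq_sqrt zero_le_two
  have hmaps := mapsTo_iptMap_closedBall G Δ (r := Real.sqrt 2) <|
    (mul_le_mul_of_nonneg_right hsmall.le (by positivity)).trans_eq <| by
      linear_combination (-3 - 2 * Real.sqrt 2) * hsqrt
  set K := Real.toNNReal (‖G‖ * ‖Δ‖ * (3 + 2 * Real.sqrt 2))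
  have hK : K < 1 := Real.toNNReal_lt_one.mpr <|
    (mul_lt_mul_of_pos_right hsmall (by positivity)).trans_eq <| by
      linear_combination (-4 : ℝ) * hsqrt
  have hlip := lipschitzOnWith_iptMap G Δ (Real.le_coe_toNNReal _ : _ ≤ (K : ℝ))
  have h1 : (1 : Matrix (Fin n) (Fin n) ℂ) ∈ closedBall 1 (Real.sqrt 2) :=
    mem_closedBall_self (Real.sqrt_nonneg 2)
  obtain ⟨Zs, hZs, hfix⟩ :=
    hlip.exists_isFixedPt hK hmaps isClosed_closedBall.isComplete ⟨1, h1⟩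
  refine ⟨hmaps, ⟨K, hK, hlip⟩, Zs, hZs, hfix,
    fun W hW hfixW => hlip.eq_of_isFixedPt hK hZs hW hfix hfixW, dist 1 Zs, K, dist_nonneg, K.2, hK,
    fun k => ?_⟩
  rw [← dist_eq_norm, mul_comm]
  exact hlip.dist_iterate_le_of_isFixedPt hmaps h1 hZs hfix k

/-- If `‖G‖‖Δ‖ < 3 − 2√2` (spectral norms), the IPT map
`F(Z) = I + G ∘ (Z·𝒟(ΔZ) − ΔZ)` maps the closed spectral-norm ball of radius `√2`
around `I` into itself, is a contraction there, has a unique fixed point `Z*` in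
that ball, and the iterates `F^k(I)` converge to `Z*` geometrically. -/
theorem IPT_contraction_convergence {n : ℕ} [NeZero n] (ε : Fin n → ℂ)
    (hdist : Function.Injective ε) (Δ : Matrix (Fin n) (Fin n) ℂ)
    (G : Matrix (Fin n) (Fin n) ℂ)
    (hG : G = Matrix.of fun j k => if j = k then 0 else (ε j - ε k)⁻¹)
    (F : Matrix (Fin n) (Fin n) ℂ → Matrix (Fin n) (Fin n) ℂ)
    (hF : F = fun Z => 1 + G ⊙ (Z * Matrix.diagonal (fun i => (Δ * Z) i i) - Δ * Z))
    (hsmall : ‖G‖ * ‖Δ‖ < 3 - 2 * Real.sqrt 2) :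
    Set.MapsTo F (Metric.closedBall (1 : Matrix (Fin n) (Fin n) ℂ) (Real.sqrt 2))
        (Metric.closedBall 1 (Real.sqrt 2)) ∧
      (∃ K : NNReal, K < 1 ∧
        LipschitzOnWith K F (Metric.closedBall 1 (Real.sqrt 2))) ∧
      ∃ Zs : Matrix (Fin n) (Fin n) ℂ,
        Zs ∈ Metric.closedBall (1 : Matrix (Fin n) (Fin n) ℂ) (Real.sqrt 2) ∧
        F Zs = Zs ∧
        (∀ W ∈ Metric.closedBall (1 : Matrix (Fin n) (Fin n) ℂ) (Real.sqrt 2),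
          F W = W → W = Zs) ∧
        ∃ C r : ℝ, 0 ≤ C ∧ 0 ≤ r ∧ r < 1 ∧
          ∀ k : ℕ, ‖F^[k] 1 - Zs‖ ≤ C * r ^ k :=
  IPT_contraction_convergence_general Δ G F hF hsmall
end

section
/- For M(ε) = [[0, ε],[ε, 1]] with partition D = diag(0,1), Δ = [[0,1],[1,0]] scaled by ε, the IPT iterates satisfy Z^{(k)} = [[1, −f^k(0)],[f^k(0), 1]], where f(x) = ε(x² − 1) and f^k denotes the k-fold iterate of f. -/
open Matrix

/-! The iterates never leave the family `R(x) = [[1, -x], [x, 1]]`: one IPT step sends `R(x)`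
to `R(ε(x² - 1))`. Hence `R` semiconjugates the quadratic map `f` to the IPT map, and the claim
follows by iterating from `Z⁽⁰⁾ = I = R(0)`. -/

def skewUnitMatrix {R : Type*} [Ring R] (x : R) : Matrix (Fin 2) (Fin 2) R :=
  !![1, -x; x, 1]

theorem skewUnitMatrix_zero {R : Type*} [Ring R] : skewUnitMatrix (0 : R) = 1 := by
  ext i j
  fin_cases i <;> fin_cases j <;> simp [skewUnitMatrix]

theorem ipt_step_skewUnitMatrix {R : Type*} [CommRing R] (ε x : R) :
    1 + !![0, -1; 1, 0] ⊙
        (skewUnitMatrix x * diagonal (fun i => (!![0, ε; ε, 0] * skewUnitMatrix x) i i)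
          - !![0, ε; ε, 0] * skewUnitMatrix x) =
      skewUnitMatrix (ε * (x ^ 2 - 1)) := by
  have hΔZ : !![0, ε; ε, 0] * skewUnitMatrix x = !![ε * x, ε; ε, -(ε * x)] := by
    simp [skewUnitMatrix]
  have hcomm : skewUnitMatrix x * diagonal (fun i => !![ε * x, ε; ε, -(ε * x)] i i)
      - !![ε * x, ε; ε, -(ε * x)] = !![0, ε * (x ^ 2 - 1); ε * (x ^ 2 - 1), 0] := by
    ext i j
    fin_cases i <;> fin_cases j <;> simp [skewUnitMatrix, diagonal_fin_two] <;> ring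
  rw [hΔZ, hcomm, skewUnitMatrix, one_fin_two]
  ext i j
  fin_cases i <;> fin_cases j <;> simp [hadamard]

/-- For the 2×2 example `D = diag(0,1)`, `Δ = ε·[[0,1],[1,0]]`, `G = [[0,−1],[1,0]]`,
the IPT iterates satisfy `Z^(k) = [[1, −f^k(0)],[f^k(0), 1]]` with `f(x) = ε(x² − 1)`. -/
theorem two_by_two_IPT_reduces_to_quadratic_map (ε : ℂ)
    (F : Matrix (Fin 2) (Fin 2) ℂ → Matrix (Fin 2) (Fin 2) ℂ)
    (hF : F = fun Z =>
      1 + (!![0, -1; 1, 0] : Matrix (Fin 2) (Fin 2) ℂ) ⊙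
        (Z * Matrix.diagonal (fun i => ((!![0, ε; ε, 0] : Matrix (Fin 2) (Fin 2) ℂ) * Z) i i)
          - !![0, ε; ε, 0] * Z))
    (f : ℂ → ℂ) (hf : f = fun x => ε * (x ^ 2 - 1)) :
    ∀ k : ℕ, F^[k] 1 = !![1, -(f^[k] 0); f^[k] 0, 1] := by
  intro k
  have hsemiconj : Function.Semiconj skewUnitMatrix f F := fun x => by
    subst hF hf
    exact (ipt_step_skewUnitMatrix ε x).symm
  rw [← skewUnitMatrix_zero, ← (hsemiconj.iterate_right k) 0]
  rfl
end

section
/- For real ε with |ε| < √3/2, the iterates f^k(0) of f(x) = ε(x² − 1) converge to the fixed point x*_− = (1 − √(1+4ε²))/(2ε), and moreover |f^k(0) − x*_−| = O(|1 − √(1+4ε²)|^k). -/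
open Filter Set

/-!
The substitution `y = ε x` conjugates `f` to the normal form `g y = y² − ε²`, whose fixed
point `q = ε x*_− = (1 − √(1+4ε²))/2` lies in `(−1/2, 0)` and has multiplier `2q`. The orbit
of `0` under `g` stays in `[−ε², 0]`, where `g ∘ g` contracts the distance to `q` by a factor
`< 1`, so the distances `u k = |g^[k] 0 − q|` are summable. Since `u (k+1) ≤ (|2q| + u k) u k`,
`u k ≤ u 0 |2q|^k ∏_{j<k} (1 + u j / |2q|) ≤ u 0 |2q|^k exp (∑ u j / |2q|)`.
-/

theorem summable_of_add_two_le_mul {u : ℕ → ℝ} {ρ : ℝ} (hu : ∀ k, 0 ≤ u k) (hρ0 : 0 ≤ ρ)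
    (hρ1 : ρ < 1) (h : ∀ k, u (k + 2) ≤ ρ * u k) : Summable u := by
  have hgeom : ∀ i k, u (2 * k + i) ≤ u i * ρ ^ k := by
    intro i k
    induction k with
    | zero => simp
    | succ k ih =>
      calc u (2 * (k + 1) + i) = u (2 * k + i + 2) := by ring_nf
        _ ≤ ρ * u (2 * k + i) := h _
        _ ≤ ρ * (u i * ρ ^ k) := by gcongr
        _ = u i * ρ ^ (k + 1) := by ring
  have hsub : ∀ i, Summable fun k => u (2 * k + i) := fun i =>
    ((summable_geometric_of_lt_one hρ0 hρ1).mul_left (u i)).of_nonneg_of_le (fun k => hu _)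
      (hgeom i)
  exact Summable.even_add_odd (hsub 0) (hsub 1)

theorem exists_le_mul_pow_of_summable {u : ℕ → ℝ} {r c : ℝ} (hr : 0 < r) (hc : 0 ≤ c)
    (hu : ∀ k, 0 ≤ u k) (hsum : Summable u) (hstep : ∀ k, u (k + 1) ≤ (r + c * u k) * u k) :
    ∃ C, ∀ k, u k ≤ C * r ^ k := by
  have hprod : ∀ k, u k ≤ u 0 * r ^ k * Real.exp (c / r * ∑ j ∈ Finset.range k, u j) := by
    intro k
    induction k with
    | zero => simp
    | succ k ih =>
      have hfactor : r + c * u k ≤ r * Real.exp (c / r * u k) := by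
        calc r + c * u k = r * (c / r * u k + 1) := by field_simp; ring
          _ ≤ r * Real.exp (c / r * u k) := by gcongr; exact Real.add_one_le_exp _
      calc u (k + 1) ≤ (r + c * u k) * u k := hstep k
        _ ≤ r * Real.exp (c / r * u k) *
              (u 0 * r ^ k * Real.exp (c / r * ∑ j ∈ Finset.range k, u j)) :=
            mul_le_mul hfactor ih (hu k) (mul_pos hr (Real.exp_pos _)).le
        _ = u 0 * r ^ (k + 1) * Real.exp (c / r * ∑ j ∈ Finset.range (k + 1), u j) := by
            rw [Finset.sum_range_succ, mul_add, Real.exp_add]; ring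
  refine ⟨u 0 * Real.exp (c / r * ∑' j, u j), fun k => (hprod k).trans ?_⟩
  have htail : ∑ j ∈ Finset.range k, u j ≤ ∑' j, u j := hsum.sum_le_tsum _ fun j _ => hu j
  calc u 0 * r ^ k * Real.exp (c / r * ∑ j ∈ Finset.range k, u j)
      ≤ u 0 * r ^ k * Real.exp (c / r * ∑' j, u j) := by have := hu 0; gcongr
    _ = u 0 * Real.exp (c / r * ∑' j, u j) * r ^ k := by ring

section NormalForm

variable {a q : ℝ}

theorem mapsTo_sq_sub_Icc (ha0 : 0 ≤ a) (ha1 : a ≤ 1) :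
    MapsTo (fun y : ℝ => y ^ 2 - a) (Icc (-a) 0) (Icc (-a) 0) := by
  rintro y ⟨hy1, hy2⟩
  constructor <;> nlinarith

theorem abs_sq_sub_sub_fixedPoint (hfix : q ^ 2 - a = q) (y : ℝ) :
    |y ^ 2 - a - q| = |y + q| * |y - q| := by
  rw [← abs_mul]
  congr 1
  linear_combination hfix

theorem abs_sq_sub_sub_fixedPoint_le (hfix : q ^ 2 - a = q) (y : ℝ) :
    |y ^ 2 - a - q| ≤ (|2 * q| + |y - q|) * |y - q| := by
  rw [abs_sq_sub_sub_fixedPoint hfix]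
  gcongr
  calc |y + q| = |2 * q + (y - q)| := by ring_nf
    _ ≤ |2 * q| + |y - q| := abs_add_le _ _

theorem exists_sq_sub_two_step_contraction (hfix : q ^ 2 - a = q) (hq : -1 / 2 < q)
    (hq0 : q < 0) :
    ∃ ρ, 0 ≤ ρ ∧ ρ < 1 ∧
      ∀ y ∈ Icc (-a) 0, |(y ^ 2 - a) ^ 2 - a - q| ≤ ρ * |y - q| := by
  -- AM-GM: the two factors `-(y + q)` and `-(y² - a + q)` are nonnegative with sum
  -- `a - 2q - (y² + y) ≤ a - 2q + 1/4`.
  refine ⟨((a - 2 * q + 1 / 4) / 2) ^ 2, by positivity, ?_, ?_⟩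
  · exact pow_lt_one₀ (by nlinarith) (by nlinarith) two_ne_zero
  · rintro y ⟨hy1, hy2⟩
    have ha0 : 0 ≤ a := by nlinarith
    have ha1 : a ≤ 1 := by nlinarith
    have hy : y ^ 2 ≤ a := by
      nlinarith [mul_nonneg (neg_nonneg.2 hy2) (by linarith : 0 ≤ a + y),
        mul_nonneg ha0 (by linarith : 0 ≤ 1 + y)]
    rw [abs_sq_sub_sub_fixedPoint hfix, abs_sq_sub_sub_fixedPoint hfix, ← mul_assoc,
      abs_of_nonpos (by linarith), abs_of_neg (by linarith)]
    gcongr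
    nlinarith [sq_nonneg (y + 1 / 2), sq_nonneg (y ^ 2 - a + q - (y + q))]

theorem sq_sub_orbit_le_geometric (hfix : q ^ 2 - a = q) (hq : -1 / 2 < q) (hq0 : q < 0) :
    ∃ C, ∀ k, |(fun y : ℝ => y ^ 2 - a)^[k] 0 - q| ≤ C * |2 * q| ^ k := by
  set g := fun y : ℝ => y ^ 2 - a
  have horbit : ∀ k, g^[k] 0 ∈ Icc (-a) 0 := fun k =>
    (mapsTo_sq_sub_Icc (by nlinarith) (by nlinarith)).iterate k ⟨by nlinarith, le_rfl⟩
  obtain ⟨ρ, hρ0, hρ1, hcontr⟩ := exists_sq_sub_two_step_contraction hfix hq hq0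
  have hsum : Summable fun k => |g^[k] 0 - q| :=
    summable_of_add_two_le_mul (fun k => abs_nonneg _) hρ0 hρ1 fun k => by
      simpa only [Function.iterate_succ_apply'] using hcontr _ (horbit k)
  exact exists_le_mul_pow_of_summable (abs_pos.2 (by linarith)) zero_le_one
    (fun k => abs_nonneg _) hsum fun k => by
      simpa only [one_mul, Function.iterate_succ_apply'] using
        abs_sq_sub_sub_fixedPoint_le hfix (g^[k] 0)

end NormalForm

/-- For real `ε` with `0 < |ε| < √3/2`, the critical orbit `f^k(0)` of
`f(x) = ε(x² − 1)` converges to the attracting fixed point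
`x*_− = (1 − √(1+4ε²))/(2ε)`, with geometric rate `|1 − √(1+4ε²)|`. -/
theorem quadratic_map_critical_orbit_converges (ε : ℝ) (hε : ε ≠ 0)
    (hsmall : |ε| < Real.sqrt 3 / 2)
    (f : ℝ → ℝ) (hf : f = fun x => ε * (x ^ 2 - 1))
    (xs : ℝ) (hxs : xs = (1 - Real.sqrt (1 + 4 * ε ^ 2)) / (2 * ε)) :
    Tendsto (fun k : ℕ => f^[k] 0) atTop (nhds xs) ∧
    ∃ C : ℝ, ∀ k : ℕ,
      |f^[k] 0 - xs| ≤ C * |1 - Real.sqrt (1 + 4 * ε ^ 2)| ^ k := by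
  set s := Real.sqrt (1 + 4 * ε ^ 2)
  have hs : s ^ 2 = 1 + 4 * ε ^ 2 := Real.sq_sqrt (by positivity)
  have hε2 : ε ^ 2 < 3 / 4 := by
    calc ε ^ 2 = |ε| ^ 2 := (sq_abs ε).symm
      _ < (Real.sqrt 3 / 2) ^ 2 := by gcongr
      _ = 3 / 4 := by rw [div_pow, Real.sq_sqrt zero_le_three]; norm_num
  have hs1 : 1 < s := (Real.lt_sqrt zero_le_one).2 (by nlinarith [sq_pos_of_ne_zero hε])
  have hs2 : s < 2 := (Real.sqrt_lt' two_pos).2 (by linarith)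
  have hconj : ∀ k, ε * f^[k] 0 = (fun y => y ^ 2 - ε ^ 2)^[k] 0 := fun k => by
    have : Function.Semiconj (ε * ·) f (fun y => y ^ 2 - ε ^ 2) := fun x => by subst hf; ring
    simpa using this.iterate_right k 0
  obtain ⟨C, hC⟩ := sq_sub_orbit_le_geometric (a := ε ^ 2) (q := (1 - s) / 2)
    (by linear_combination hs / 4) (by linarith) (by linarith)
  have hbound : ∀ k, |f^[k] 0 - xs| ≤ C / |ε| * |1 - s| ^ k := fun k => by
    calc |f^[k] 0 - xs| = |ε * f^[k] 0 - (1 - s) / 2| / |ε| := by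
          rw [← abs_div, hxs]; congr 1; field_simp
      _ ≤ C * |2 * ((1 - s) / 2)| ^ k / |ε| := by rw [hconj]; gcongr; exact hC k
      _ = C / |ε| * |1 - s| ^ k := by rw [mul_div_cancel₀ _ two_ne_zero]; ring
  refine ⟨?_, C / |ε|, hbound⟩
  have hrate : |1 - s| < 1 := by rw [abs_lt]; constructor <;> linarith
  rw [tendsto_iff_norm_sub_tendsto_zero]
  exact squeeze_zero (fun _ => norm_nonneg _) hbound <| by
    simpa using (tendsto_pow_atTop_nhds_zero_of_lt_one (abs_nonneg _) hrate).const_mul (C / |ε|)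
end

section
/- Rayleigh–Schrödinger recursion: let D be diagonal with distinct entries ε_i, Δ ∈ ℂ^{n×n}, G the inverse gaps matrix, and define matrices A^{[0]} = I and A^{[ℓ]} = G ∘ ( Σ_{s=0}^{ℓ−1} A^{[ℓ−1−s]}·𝒟(Δ A^{[s]}) − Δ A^{[ℓ−1]} ) for ℓ ≥ 1. Then each A^{[ℓ]} for ℓ ≥ 1 has zero diagonal, and for each i, the formal power series z_i(ε) = Σ_ℓ ε^ℓ (A^{[ℓ]} e_i) satisfies (D + εΔ) z_i = λ_i z_i as formal power series, with λ_i = ε_i + Σ_{ℓ≥1} ε^ℓ (Δ A^{[ℓ−1]})_{ii}. -/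
/-!
Read off entry `(j, i)`, the recursion says `(ε_j − ε_i) A^{ℓ+1}_{ji} = Σ_s A^{ℓ−s}_{ji} (ΔAˢ)_{ii} − (ΔA^ℓ)_{ji}`:
off the diagonal because `G_{ji}` inverts the gap, on the diagonal because both sides vanish
(the Hadamard factor `G` kills `A^{ℓ+1}_{ii}`, and since `A⁰ = I` while the higher `A^k` have zero
diagonal, the sum collapses to its `s = ℓ` term `(ΔA^ℓ)_{ii}`). This identity, with
`λ_{s+1} = (ΔAˢ)_{ii}`, is exactly the coefficient of `ε^{m+1}` in `(D + εΔ) z_i = λ_i z_i`.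
-/

open Matrix Finset

theorem Finset.sum_range_sub_mul_eq_of_delta {R : Type*} [Semiring R] {a c : ℕ → R}
    (h0 : a 0 = 1) (hsucc : ∀ k, a (k + 1) = 0) (ℓ : ℕ) :
    ∑ s ∈ range (ℓ + 1), a (ℓ - s) * c s = c ℓ := by
  rw [sum_eq_single_of_mem ℓ (self_mem_range_succ ℓ), Nat.sub_self, h0, one_mul]
  intro s hs hsℓ
  obtain ⟨k, hk⟩ : ∃ k, ℓ - s = k + 1 :=
    Nat.exists_eq_add_one.mpr (Nat.sub_pos_of_lt ((mem_range_succ_iff.mp hs).lt_of_ne hsℓ))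
  rw [hk, hsucc, zero_mul]

namespace RayleighSchrodinger

variable {ι K : Type*} [DecidableEq ι] [Field K]

def invGapMatrix (ε : ι → K) : Matrix ι ι K :=
  of fun j k => if j = k then 0 else (ε j - ε k)⁻¹

theorem hadamard_invGapMatrix_apply_self (ε : ι → K) (M : Matrix ι ι K) (j : ι) :
    (invGapMatrix ε ⊙ M) j j = 0 := by
  simp [invGapMatrix, hadamard_apply]

theorem sub_mul_hadamard_invGapMatrix_apply {ε : ι → K} (hε : Function.Injective ε)
    (M : Matrix ι ι K) {j k : ι} (hjk : j ≠ k) :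
    (ε j - ε k) * (invGapMatrix ε ⊙ M) j k = M j k := by
  have hgap : ε j - ε k ≠ 0 := sub_ne_zero.mpr (hε.ne hjk)
  simp [invGapMatrix, hadamard_apply, hjk, hgap]

variable [Fintype ι]

def correction (Δ : Matrix ι ι K) (A : ℕ → Matrix ι ι K) (ℓ : ℕ) : Matrix ι ι K :=
  ∑ s ∈ range (ℓ + 1), A (ℓ - s) * diagonal (fun j => (Δ * A s) j j) - Δ * A ℓ

theorem correction_apply (Δ : Matrix ι ι K) (A : ℕ → Matrix ι ι K) (ℓ : ℕ) (j i : ι) :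
    correction Δ A ℓ j i = ∑ s ∈ range (ℓ + 1), A (ℓ - s) j i * (Δ * A s) i i - (Δ * A ℓ) j i := by
  simp [correction, Matrix.sum_apply, mul_diagonal]

theorem correction_apply_self {Δ : Matrix ι ι K} {A : ℕ → Matrix ι ι K} (hA0 : A 0 = 1)
    (hdiag : ∀ k j, A (k + 1) j j = 0) (ℓ : ℕ) (j : ι) : correction Δ A ℓ j j = 0 := by
  rw [correction_apply, sum_range_sub_mul_eq_of_delta (a := fun k => A k j j)
    (by simp [hA0]) (fun k => hdiag k j), sub_self]

variable {ε : ι → K} {Δ : Matrix ι ι K} {A : ℕ → Matrix ι ι K}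

theorem diag_eq_zero (hA : ∀ ℓ, A (ℓ + 1) = invGapMatrix ε ⊙ correction Δ A ℓ) (ℓ : ℕ) (j : ι) :
    A (ℓ + 1) j j = 0 := by
  rw [hA, hadamard_invGapMatrix_apply_self]

theorem sub_mul_apply_eq_correction_apply (hε : Function.Injective ε) (hA0 : A 0 = 1)
    (hA : ∀ ℓ, A (ℓ + 1) = invGapMatrix ε ⊙ correction Δ A ℓ) (ℓ : ℕ) (j i : ι) :
    (ε j - ε i) * A (ℓ + 1) j i = correction Δ A ℓ j i := by
  rcases eq_or_ne j i with rfl | hji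
  · rw [diag_eq_zero hA, mul_zero, correction_apply_self hA0 (diag_eq_zero hA)]
  · rw [hA, sub_mul_hadamard_invGapMatrix_apply hε _ hji]

theorem eigen_coeff_apply (hε : Function.Injective ε) (hA0 : A 0 = 1)
    (hA : ∀ ℓ, A (ℓ + 1) = invGapMatrix ε ⊙ correction Δ A ℓ) (m : ℕ) (j i : ι) :
    ε j * A (m + 1) j i + (Δ * A m) j i =
      ε i * A (m + 1) j i + ∑ s ∈ range (m + 1), (Δ * A s) i i * A (m - s) j i := by
  have key := sub_mul_apply_eq_correction_apply hε hA0 hA m j i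
  rw [correction_apply] at key
  simp_rw [mul_comm ((Δ * A _) i i)]
  linear_combination key

end RayleighSchrodinger

open RayleighSchrodinger in
/-- Rayleigh–Schrödinger recursion: with `A⁰ = I` and
`Aℓ⁺¹ = G ∘ (Σ_{s≤ℓ} A^{ℓ−s}·𝒟(ΔAˢ) − ΔAℓ)`, each `Aℓ` (`ℓ ≥ 1`) has zero
diagonal, and the formal power series `z_i = Σ εᵏ (Aᵏ e_i)` satisfies
`(D + εΔ) z_i = λ_i z_i` coefficientwise, with
`λ_i = ε_i + Σ_{ℓ≥1} εˡ (ΔA^{ℓ−1})_{ii}`. -/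
theorem rayleigh_schrodinger_recursion {n : ℕ} (ε : Fin n → ℂ)
    (hdist : Function.Injective ε) (Δ : Matrix (Fin n) (Fin n) ℂ)
    (G : Matrix (Fin n) (Fin n) ℂ)
    (hG : G = Matrix.of fun j k => if j = k then 0 else (ε j - ε k)⁻¹)
    (A : ℕ → Matrix (Fin n) (Fin n) ℂ) (hA0 : A 0 = 1)
    (hA : ∀ ℓ : ℕ, A (ℓ + 1) =
      G ⊙ (∑ s ∈ Finset.range (ℓ + 1),
              A (ℓ - s) * Matrix.diagonal (fun j => (Δ * A s) j j)
            - Δ * A ℓ))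
    (i : Fin n) (lam : ℕ → ℂ) (hlam0 : lam 0 = ε i)
    (hlam : ∀ ℓ : ℕ, lam (ℓ + 1) = (Δ * A ℓ) i i) :
    (∀ ℓ : ℕ, ∀ j : Fin n, A (ℓ + 1) j j = 0) ∧
    (Matrix.diagonal ε).mulVec (fun j => A 0 j i) =
      lam 0 • (fun j => A 0 j i) ∧
    ∀ m : ℕ,
      ((Matrix.diagonal ε).mulVec (fun j => A (m + 1) j i)
          + Δ.mulVec (fun j => A m j i)) =
        ∑ s ∈ Finset.range (m + 2), lam s • (fun j => A (m + 1 - s) j i) := by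
  subst hG
  replace hA : ∀ ℓ, A (ℓ + 1) = invGapMatrix ε ⊙ correction Δ A ℓ := hA
  refine ⟨diag_eq_zero hA, ?_, fun m => ?_⟩
  · ext j
    by_cases hji : j = i <;> simp [hA0, mulVec_diagonal, one_apply, hlam0, hji]
  · ext j
    have hcol : (Δ *ᵥ fun j => A m j i) j = (Δ * A m) j i := by
      simp [mulVec, mul_apply, dotProduct]
    simp only [Pi.add_apply, mulVec_diagonal, hcol, Finset.sum_apply, Pi.smul_apply, smul_eq_mul,
      sum_range_succ' _ (m + 1), hlam, hlam0, Nat.add_sub_add_right, Nat.sub_zero]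
    rw [eigen_coeff_apply hdist hA0 hA m j i, add_comm]
end

section
/- If an n×n complex matrix M has an eigenvalue of algebraic multiplicity greater than one, then for every partition M̃ = D̃ + Δ̃ of any matrix M̃ similar to M, where D̃ is diagonal with pairwise distinct diagonal entries and G̃ is the associated inverse gaps matrix, one has ‖G̃‖‖Δ̃‖ ≥ 3 − 2√2. -/
open Matrix
open scoped Matrix.Norms.L2Operator

/-!
If `‖G̃‖‖Δ̃‖ < 3 − 2√2 < 1/4`, every gap `|ε j − ε k|` exceeds `4‖Δ̃‖`. For each `j`, a contraction
on the closed unit ball yields an eigenvector `e_j + w` of `M̃ = diagonal ε + Δ̃` whose eigenvalue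
lies within `2‖Δ̃‖` of `ε j`. These `n` eigenvalues are pairwise distinct, so the characteristic
polynomial of `M̃`, which is that of `M`, has `n` simple roots.
-/

theorem Polynomial.rootMultiplicity_le_one_of_injective {R ι : Type*} [CommRing R] [IsDomain R]
    [Fintype ι] {p : Polynomial R} (hp : p ≠ 0) {f : ι → R} (hf : Function.Injective f)
    (hroot : ∀ i, p.IsRoot (f i)) (hdeg : p.natDegree ≤ Fintype.card ι) (a : R) :
    p.rootMultiplicity a ≤ 1 := by
  classical
  set T := Finset.univ.image f
  have hle : T.val ≤ p.roots := (Multiset.le_iff_subset T.nodup).2 fun x hx => by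
    obtain ⟨i, -, rfl⟩ := Finset.mem_image.1 hx
    exact (mem_roots hp).2 (hroot i)
  have hroots : T.val = p.roots := Multiset.eq_of_le_of_card_le hle <| by
    rw [Finset.card_val, Finset.card_image_of_injective _ hf, Finset.card_univ]
    exact (card_roots' p).trans hdeg
  rw [← count_roots, ← hroots]
  exact Multiset.nodup_iff_count_le_one.1 T.nodup a

theorem norm_inv_sub_inv_le {K : Type*} [NormedField K] {a b : K} {m : ℝ} (hm : 0 < m)
    (ha : m ≤ ‖a‖) (hb : m ≤ ‖b‖) : ‖a⁻¹ - b⁻¹‖ ≤ ‖a - b‖ / m ^ 2 := by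
  have ha0 : a ≠ 0 := norm_pos_iff.1 (hm.trans_le ha)
  have hb0 : b ≠ 0 := norm_pos_iff.1 (hm.trans_le hb)
  rw [inv_sub_inv ha0 hb0, norm_div, norm_mul, norm_sub_rev, sq]
  gcongr

theorem exists_lt_forall_le_of_forall_lt {ι : Type*} [Finite ι] {p : ι → Prop} {a : ℝ}
    {b : ι → ℝ} (h : ∀ i, p i → a < b i) : ∃ g, a < g ∧ ∀ i, p i → g ≤ b i := by
  have hev : ∀ᶠ x in nhds a, ∀ i, p i → x < b i :=
    Filter.eventually_all.2 fun i => Filter.eventually_imp_distrib_left.2 fun hi =>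
      eventually_lt_nhds (h i hi)
  obtain ⟨g, hg, hga⟩ := ((hev.filter_mono nhdsWithin_le_nhds).and
    (self_mem_nhdsWithin (s := Set.Ioi a))).exists
  exact ⟨g, hga, fun i hi => (hg i hi).le⟩

namespace Matrix

variable {ι : Type*} [Fintype ι] [DecidableEq ι]

theorem isRoot_charpoly_of_mulVec_eq_smul {K : Type*} [Field K] {A : Matrix ι ι K} {v : ι → K}
    {μ : K} (hv : v ≠ 0) (h : A *ᵥ v = μ • v) : A.charpoly.IsRoot μ := by
  rw [Polynomial.IsRoot, eval_charpoly, ← exists_mulVec_eq_zero_iff]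
  refine ⟨v, hv, ?_⟩
  ext i
  simp [sub_mulVec, h]

variable {𝕜 : Type*} [RCLike 𝕜]

theorem norm_apply_le_l2_opNorm_s19 {m : Type*} [Fintype m] (A : Matrix m ι 𝕜) (i : m) (k : ι) :
    ‖A i k‖ ≤ ‖A‖ := by
  calc ‖A i k‖ = ‖(EuclideanSpace.equiv m 𝕜).symm (A *ᵥ EuclideanSpace.single k 1) i‖ := by
        simp [mulVec_single]
    _ ≤ ‖(EuclideanSpace.equiv m 𝕜).symm (A *ᵥ EuclideanSpace.single k 1)‖ :=
        PiLp.norm_apply_le _ _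
    _ ≤ ‖A‖ * ‖EuclideanSpace.single k (1 : 𝕜)‖ := A.l2_opNorm_mulVec _
    _ = ‖A‖ := by simp

theorem norm_toEuclideanCLM_apply_le (A : Matrix ι ι 𝕜) (x : EuclideanSpace 𝕜 ι) :
    ‖toEuclideanCLM (𝕜 := 𝕜) A x‖ ≤ ‖A‖ * ‖x‖ :=
  (toEuclideanCLM (𝕜 := 𝕜) A).le_opNorm x

theorem norm_diagonal_mul_le (c : ι → 𝕜) (A : Matrix ι ι 𝕜) : ‖diagonal c * A‖ ≤ ‖c‖ * ‖A‖ :=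
  (l2_opNorm_mul _ _).trans_eq (by rw [l2_opNorm_diagonal])

end Matrix

noncomputable section

variable {ι 𝕜 : Type*} [Fintype ι] [DecidableEq ι] [RCLike 𝕜] {ε : ι → 𝕜} {Δ : Matrix ι ι 𝕜}

namespace DiagonalPerturbation

variable (ε Δ) (j : ι)

/- A fixed point `w` of `eigvecMap ε Δ j` has `w j = 0`, and `v = eigvec j w = e_j + w` is then an
eigenvector of `diagonal ε + Δ` for `λ = eigval ε Δ j w`: rows `k ≠ j` of the eigen-equation read
`(λ - ε k) v k = (Δ v) k`, and row `j` is the definition of `λ`. -/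

def eigvec (w : EuclideanSpace 𝕜 ι) : EuclideanSpace 𝕜 ι := EuclideanSpace.single j 1 + w

def eigval (w : EuclideanSpace 𝕜 ι) : 𝕜 := ε j + (Δ *ᵥ (eigvec j w).ofLp) j

def resolvent (w : EuclideanSpace 𝕜 ι) : ι → 𝕜 :=
  fun k => if k = j then 0 else (eigval ε Δ j w - ε k)⁻¹

def eigvecMap (w : EuclideanSpace 𝕜 ι) : EuclideanSpace 𝕜 ι :=
  toEuclideanCLM (𝕜 := 𝕜) (diagonal (resolvent ε Δ j w) * Δ) (eigvec j w)

variable {ε Δ j}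

theorem eigvecMap_apply (w : EuclideanSpace 𝕜 ι) (k : ι) :
    eigvecMap ε Δ j w k = resolvent ε Δ j w k * (Δ *ᵥ (eigvec j w).ofLp) k := by
  simp [eigvecMap, mulVec_diagonal]

theorem apply_self_eq_zero_of_eigvecMap_eq {w : EuclideanSpace 𝕜 ι}
    (hfix : eigvecMap ε Δ j w = w) : w j = 0 := by
  rw [← hfix, eigvecMap_apply, resolvent, if_pos rfl, zero_mul]

theorem mulVec_eigvec_of_eigvecMap_eq {w : EuclideanSpace 𝕜 ι} (hfix : eigvecMap ε Δ j w = w)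
    (hne : ∀ k ≠ j, eigval ε Δ j w ≠ ε k) :
    (diagonal ε + Δ) *ᵥ (eigvec j w).ofLp = eigval ε Δ j w • (eigvec j w).ofLp := by
  ext k
  have hk : resolvent ε Δ j w k * (Δ *ᵥ (eigvec j w).ofLp) k = w k := by
    rw [← eigvecMap_apply, hfix]
  by_cases hkj : k = j
  · subst hkj
    simp [eigvec, eigval, add_mulVec, mulVec_diagonal, apply_self_eq_zero_of_eigvecMap_eq hfix]
  · have hgap : eigval ε Δ j w - ε k ≠ 0 := sub_ne_zero.2 (hne k hkj)
    simp only [resolvent, if_neg hkj] at hk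
    simp only [eigvec, WithLp.ofLp_add, PiLp.ofLp_single, add_mulVec, Pi.add_apply,
      mulVec_diagonal, Pi.single_eq_of_ne hkj, ← hk, zero_add, Pi.smul_apply, smul_eq_mul]
    field_simp
    ring

theorem norm_eigvec_le {w : EuclideanSpace 𝕜 ι} (hw : ‖w‖ ≤ 1) : ‖eigvec j w‖ ≤ 2 := by
  calc ‖eigvec j w‖ ≤ ‖EuclideanSpace.single j (1 : 𝕜)‖ + ‖w‖ := norm_add_le _ _
    _ ≤ 2 := by rw [PiLp.norm_single, norm_one]; linarith

theorem norm_toEuclideanCLM_eigvec_le {w : EuclideanSpace 𝕜 ι} (hw : ‖w‖ ≤ 1) :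
    ‖toEuclideanCLM (𝕜 := 𝕜) Δ (eigvec j w)‖ ≤ 2 * ‖Δ‖ := by
  calc _ ≤ ‖Δ‖ * ‖eigvec j w‖ := norm_toEuclideanCLM_apply_le _ _
    _ ≤ ‖Δ‖ * 2 := by gcongr; exact norm_eigvec_le hw
    _ = 2 * ‖Δ‖ := mul_comm _ _

theorem norm_eigval_sub_le {w : EuclideanSpace 𝕜 ι} (hw : ‖w‖ ≤ 1) :
    ‖eigval ε Δ j w - ε j‖ ≤ 2 * ‖Δ‖ := by
  rw [eigval, add_sub_cancel_left, ← ofLp_toEuclideanCLM]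
  exact (PiLp.norm_apply_le _ j).trans (norm_toEuclideanCLM_eigvec_le hw)

theorem le_norm_eigval_sub {m : ℝ} (hgap : ∀ k ≠ j, m + 2 * ‖Δ‖ ≤ ‖ε j - ε k‖)
    {w : EuclideanSpace 𝕜 ι} (hw : ‖w‖ ≤ 1) {k : ι} (hk : k ≠ j) :
    m ≤ ‖eigval ε Δ j w - ε k‖ := by
  have := norm_sub_le (eigval ε Δ j w - ε k) (eigval ε Δ j w - ε j)
  rw [sub_sub_sub_cancel_left] at this
  linarith [hgap k hk, norm_eigval_sub_le (ε := ε) (Δ := Δ) (j := j) hw]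

theorem norm_eigval_sub_eigval_le (w w' : EuclideanSpace 𝕜 ι) :
    ‖eigval ε Δ j w - eigval ε Δ j w'‖ ≤ ‖Δ‖ * ‖w - w'‖ := by
  have : eigval ε Δ j w - eigval ε Δ j w' = toEuclideanCLM (𝕜 := 𝕜) Δ (w - w') j := by
    simp [eigval, eigvec, mulVec_add]
  rw [this]
  exact (PiLp.norm_apply_le _ j).trans (norm_toEuclideanCLM_apply_le _ _)

theorem norm_resolvent_le {m : ℝ} (hm : 0 < m) (hgap : ∀ k ≠ j, m + 2 * ‖Δ‖ ≤ ‖ε j - ε k‖)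
    {w : EuclideanSpace 𝕜 ι} (hw : ‖w‖ ≤ 1) : ‖resolvent ε Δ j w‖ ≤ m⁻¹ := by
  refine (pi_norm_le_iff_of_nonneg (by positivity)).2 fun k => ?_
  by_cases hk : k = j
  · simp [resolvent, hk, hm.le]
  · rw [resolvent, if_neg hk, norm_inv]
    exact inv_anti₀ hm (le_norm_eigval_sub hgap hw hk)

theorem norm_resolvent_sub_le {m : ℝ} (hm : 0 < m)
    (hgap : ∀ k ≠ j, m + 2 * ‖Δ‖ ≤ ‖ε j - ε k‖) {w w' : EuclideanSpace 𝕜 ι} (hw : ‖w‖ ≤ 1)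
    (hw' : ‖w'‖ ≤ 1) :
    ‖resolvent ε Δ j w - resolvent ε Δ j w'‖ ≤ ‖eigval ε Δ j w - eigval ε Δ j w'‖ / m ^ 2 := by
  refine (pi_norm_le_iff_of_nonneg (by positivity)).2 fun k => ?_
  by_cases hk : k = j
  · simp only [hk, Pi.sub_apply, resolvent, ↓reduceIte, sub_self, norm_zero]
    positivity
  · simp only [Pi.sub_apply, resolvent, if_neg hk]
    refine (norm_inv_sub_inv_le hm (le_norm_eigval_sub hgap hw hk)
      (le_norm_eigval_sub hgap hw' hk)).trans_eq ?_
    rw [sub_sub_sub_cancel_right]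

theorem norm_eigvecMap_le {m : ℝ} (hm : 0 < m) (hgap : ∀ k ≠ j, m + 2 * ‖Δ‖ ≤ ‖ε j - ε k‖)
    {w : EuclideanSpace 𝕜 ι} (hw : ‖w‖ ≤ 1) : ‖eigvecMap ε Δ j w‖ ≤ 2 * ‖Δ‖ / m := by
  calc ‖eigvecMap ε Δ j w‖ ≤ ‖resolvent ε Δ j w‖ * ‖Δ‖ * ‖eigvec j w‖ :=
        (norm_toEuclideanCLM_apply_le _ _).trans (by gcongr; exact norm_diagonal_mul_le _ _)
    _ ≤ m⁻¹ * ‖Δ‖ * 2 := by gcongr; exacts [norm_resolvent_le hm hgap hw, norm_eigvec_le hw]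
    _ = 2 * ‖Δ‖ / m := by ring

theorem eigvecMap_sub_eigvecMap (w w' : EuclideanSpace 𝕜 ι) :
    eigvecMap ε Δ j w - eigvecMap ε Δ j w' =
      toEuclideanCLM (𝕜 := 𝕜) (diagonal (resolvent ε Δ j w) * Δ) (w - w') +
      toEuclideanCLM (𝕜 := 𝕜)
        (diagonal (resolvent ε Δ j w - resolvent ε Δ j w') * Δ) (eigvec j w') := by
  have hvec : eigvec j w = eigvec j w' + (w - w') := by rw [eigvec, eigvec]; abel
  have hdiag : diagonal (resolvent ε Δ j w - resolvent ε Δ j w') =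
      diagonal (resolvent ε Δ j w) - diagonal (resolvent ε Δ j w') := (diagonal_sub _ _).symm
  simp only [eigvecMap, hdiag, sub_mul, map_sub, _root_.sub_apply, hvec, map_add]
  abel

theorem norm_eigvecMap_sub_eigvecMap_le {m : ℝ} (hm : 0 < m)
    (hgap : ∀ k ≠ j, m + 2 * ‖Δ‖ ≤ ‖ε j - ε k‖) {w w' : EuclideanSpace 𝕜 ι} (hw : ‖w‖ ≤ 1)
    (hw' : ‖w'‖ ≤ 1) :
    ‖eigvecMap ε Δ j w - eigvecMap ε Δ j w'‖ ≤ (‖Δ‖ / m + 2 * (‖Δ‖ / m) ^ 2) * ‖w - w'‖ := by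
  have hres := norm_resolvent_sub_le hm hgap hw hw'
  have heig := norm_eigval_sub_eigval_le (ε := ε) (Δ := Δ) (j := j) w w'
  rw [eigvecMap_sub_eigvecMap]
  refine (norm_add_le _ _).trans ?_
  calc _ ≤ ‖resolvent ε Δ j w‖ * ‖Δ‖ * ‖w - w'‖ +
        ‖resolvent ε Δ j w - resolvent ε Δ j w'‖ * ‖Δ‖ * ‖eigvec j w'‖ := by
        gcongr <;> exact (norm_toEuclideanCLM_apply_le _ _).trans
          (by gcongr; exact norm_diagonal_mul_le _ _)
    _ ≤ m⁻¹ * ‖Δ‖ * ‖w - w'‖ + ‖Δ‖ * ‖w - w'‖ / m ^ 2 * ‖Δ‖ * 2 := by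
        gcongr
        exacts [norm_resolvent_le hm hgap hw, hres.trans (by gcongr), norm_eigvec_le hw']
    _ = _ := by ring

theorem exists_eigvecMap_eq {m : ℝ} (hm : 2 * ‖Δ‖ < m)
    (hgap : ∀ k ≠ j, m + 2 * ‖Δ‖ ≤ ‖ε j - ε k‖) :
    ∃ w : EuclideanSpace 𝕜 ι, ‖w‖ ≤ 1 ∧ eigvecMap ε Δ j w = w := by
  have hm0 : 0 < m := by linarith [norm_nonneg Δ]
  set s := Metric.closedBall (0 : EuclideanSpace 𝕜 ι) 1
  have hs : ∀ w ∈ s, ‖w‖ ≤ 1 := fun w hw => mem_closedBall_zero_iff.1 hw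
  have hmaps : Set.MapsTo (eigvecMap ε Δ j) s s := fun w hw => mem_closedBall_zero_iff.2 <|
    (norm_eigvecMap_le hm0 hgap (hs w hw)).trans <| (div_le_one hm0).2 hm.le
  set t := ‖Δ‖ / m
  have ht : t < 1 / 2 := by rw [div_lt_iff₀ hm0]; linarith
  have hK : t + 2 * t ^ 2 < 1 := by nlinarith [div_nonneg (norm_nonneg Δ) hm0.le]
  let K : NNReal := ⟨t + 2 * t ^ 2, by positivity⟩
  have hlip : LipschitzOnWith K (eigvecMap ε Δ j) s := .of_dist_le_mul fun w hw w' hw' => by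
    rw [dist_eq_norm, dist_eq_norm]
    exact norm_eigvecMap_sub_eigvecMap_le hm0 hgap (hs w hw) (hs w' hw')
  obtain ⟨w, hw, hfix, -⟩ := ContractingWith.exists_fixedPoint'
    Metric.isClosed_closedBall.isComplete hmaps ⟨hK, hlip.mapsToRestrict hmaps⟩
    (Metric.mem_closedBall_self zero_le_one) (edist_ne_top _ _)
  exact ⟨w, hs w hw, hfix⟩

end DiagonalPerturbation

open DiagonalPerturbation

theorem exists_isRoot_charpoly_diagonal_add {j : ι} (hgap : ∀ k ≠ j, 4 * ‖Δ‖ < ‖ε j - ε k‖) :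
    ∃ μ, ‖μ - ε j‖ ≤ 2 * ‖Δ‖ ∧ (diagonal ε + Δ).charpoly.IsRoot μ := by
  obtain ⟨g, hg, hgj⟩ := exists_lt_forall_le_of_forall_lt hgap
  have hgap' : ∀ k ≠ j, (g - 2 * ‖Δ‖) + 2 * ‖Δ‖ ≤ ‖ε j - ε k‖ := fun k hk => by
    linarith [hgj k hk]
  obtain ⟨w, hw, hfix⟩ := exists_eigvecMap_eq (by linarith) hgap'
  have hne : ∀ k ≠ j, eigval ε Δ j w ≠ ε k := fun k hk => sub_ne_zero.1 <| norm_pos_iff.1 <|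
    (by linarith [norm_nonneg Δ] : 0 < g - 2 * ‖Δ‖).trans_le (le_norm_eigval_sub hgap' hw hk)
  have hvec : (eigvec j w).ofLp ≠ 0 := fun h => by
    simpa [eigvec, apply_self_eq_zero_of_eigvecMap_eq hfix] using congrFun h j
  exact ⟨eigval ε Δ j w, norm_eigval_sub_le hw,
    isRoot_charpoly_of_mulVec_eq_smul hvec (mulVec_eigvec_of_eigvecMap_eq hfix hne)⟩

theorem rootMultiplicity_charpoly_diagonal_add_le_one
    (hgap : ∀ j k, j ≠ k → 4 * ‖Δ‖ < ‖ε j - ε k‖) (a : 𝕜) :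
    (diagonal ε + Δ).charpoly.rootMultiplicity a ≤ 1 := by
  choose μ hμ hroot using fun j =>
    exists_isRoot_charpoly_diagonal_add (fun k hk => hgap j k (Ne.symm hk))
  refine Polynomial.rootMultiplicity_le_one_of_injective (charpoly_monic _).ne_zero
    (fun j k hjk => ?_) hroot (charpoly_natDegree_eq_dim _).le a
  by_contra hne
  have htri := norm_sub_le (μ k - ε k) (μ k - ε j)
  rw [sub_sub_sub_cancel_left] at htri
  linarith [hgap j k hne, hμ k, hjk ▸ hμ j]

end

theorem multiple_eigenvalue_obstruction_general {n : ℕ}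
    (M : Matrix (Fin n) (Fin n) ℂ)
    (hmult : ∃ μ : ℂ, 1 < M.charpoly.rootMultiplicity μ) :
    ∀ (S : Matrix (Fin n) (Fin n) ℂ), IsUnit S.det →
    ∀ (ε : Fin n → ℂ), Function.Injective ε →
    ∀ (Δ : Matrix (Fin n) (Fin n) ℂ),
      S * M * S⁻¹ = Matrix.diagonal ε + Δ →
      3 - 2 * Real.sqrt 2 ≤
        ‖(Matrix.of fun j k => if j = k then 0 else (ε j - ε k)⁻¹ :
            Matrix (Fin n) (Fin n) ℂ)‖ * ‖Δ‖ := by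
  intro S hS ε hε Δ hA
  by_contra! hlt
  set G : Matrix (Fin n) (Fin n) ℂ := .of fun j k => if j = k then 0 else (ε j - ε k)⁻¹
  have hquarter : ‖G‖ * ‖Δ‖ < 1 / 4 :=
    hlt.trans (by nlinarith [Real.sq_sqrt (zero_le_two : (0 : ℝ) ≤ 2), Real.sqrt_nonneg 2])
  have hgap : ∀ j k, j ≠ k → 4 * ‖Δ‖ < ‖ε j - ε k‖ := fun j k hjk => by
    have hpos : 0 < ‖ε j - ε k‖ := norm_pos_iff.2 (sub_ne_zero.2 (hε.ne hjk))
    have hentry : ‖ε j - ε k‖⁻¹ ≤ ‖G‖ := by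
      simpa [G, hjk] using norm_apply_le_l2_opNorm_s19 G j k
    have hlt' : ‖Δ‖ / ‖ε j - ε k‖ < 1 / 4 := by
      rw [div_eq_mul_inv]; nlinarith [norm_nonneg Δ]
    rw [div_lt_iff₀ hpos] at hlt'
    linarith
  obtain ⟨μ, hμ⟩ := hmult
  have hsimple := rootMultiplicity_charpoly_diagonal_add_le_one hgap μ
  rw [← hA, show (S * M * S⁻¹).charpoly = M.charpoly from
    charpoly_units_conj (S.nonsingInvUnit hS) M] at hsimple
  omega

/-- If `M` has an eigenvalue of algebraic multiplicity greater than one, then every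
partition `M̃ = D̃ + Δ̃` of any matrix `M̃` similar to `M`, with `D̃` diagonal with
pairwise distinct entries and `G̃` the inverse gaps matrix, satisfies
`‖G̃‖‖Δ̃‖ ≥ 3 − 2√2`. -/
theorem multiple_eigenvalue_obstruction {n : ℕ} [NeZero n]
    (M : Matrix (Fin n) (Fin n) ℂ)
    (hmult : ∃ μ : ℂ, 1 < M.charpoly.rootMultiplicity μ) :
    ∀ (S : Matrix (Fin n) (Fin n) ℂ), IsUnit S.det →
    ∀ (ε : Fin n → ℂ), Function.Injective ε →
    ∀ (Δ : Matrix (Fin n) (Fin n) ℂ),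
      S * M * S⁻¹ = Matrix.diagonal ε + Δ →
      3 - 2 * Real.sqrt 2 ≤
        ‖(Matrix.of fun j k => if j = k then 0 else (ε j - ε k)⁻¹ :
            Matrix (Fin n) (Fin n) ℂ)‖ * ‖Δ‖ :=
  multiple_eigenvalue_obstruction_general M hmult
end
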